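/- arXiv:cs/0207087 — 4 statements merged into one kernel-verified Lean document; each statement's English description precedes it below -/
import Mathlib

section
/- Let (A, Con, Δ, ⊢) be a normal default structure. Every information state x of the underlying information system has at least one extension. -/
/-!
The extension is built in stages, as in Reiter's construction for normal defaults: starting from
`x`, each stage adds a maximal set of conclusions of defaults whose premises already hold, subject
to staying consistent (Zorn's lemma, since consistency has finite character), and then closes under
`⊢`. Because premises and entailments are finite, the union `y` of the stages is a consistent
`⊢`-closed set. A default that fires in `Φ(x, y)` has its premises in some stage, so by maximality
its conclusion was added there; conversely every conclusion added to a stage is consistent with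
`y`, so `Φ(x, y)` reaches every stage.
-/

/-- A set is consistent if every finite subset of it lies in Con. -/
def IsCons {α : Type*} (Con : Set α → Prop) (S : Set α) : Prop :=
  ∀ X : Set α, X ⊆ S → X.Finite → Con X

/-- F(X) := {a ∈ A | ∃ finite Y ⊆ X with Y ∈ Con and Y ⊢ a}. -/
def Fop {α : Type*} (Con : Set α → Prop) (ent : Set α → α → Prop) (S : Set α) : Set α :=
  {a | ∃ Y : Set α, Y ⊆ S ∧ Y.Finite ∧ Con Y ∧ ent Y a}

/-- φ(x, S, 0) = x and
φ(x, S, i+1) = F(φ(x, S, i)) ∪ {a | (X, a) ∈ Δ, X ⊆ φ(x, S, i), {a} ∪ S consistent}. -/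
def phi {α : Type*} (Con : Set α → Prop) (ent : Set α → α → Prop)
    (Δ : Set (Set α × α)) (x S : Set α) : ℕ → Set α
  | 0 => x
  | i + 1 =>
      Fop Con ent (phi Con ent Δ x S i) ∪
        {a | ∃ X : Set α, (X, a) ∈ Δ ∧ X ⊆ phi Con ent Δ x S i ∧ IsCons Con ({a} ∪ S)}

/-- Φ(x, S) = ⋃_{i≥0} φ(x, S, i). -/
def Phi {α : Type*} (Con : Set α → Prop) (ent : Set α → α → Prop)
    (Δ : Set (Set α × α)) (x S : Set α) : Set α :=
  ⋃ i, phi Con ent Δ x S i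

/-- An information state is a set of the form F(X) with X consistent. -/
def IsState {α : Type*} (Con : Set α → Prop) (ent : Set α → α → Prop) (x : Set α) : Prop :=
  ∃ X : Set α, IsCons Con X ∧ x = Fop Con ent X

/-- An information state y is an extension of x (written x ε y) if Φ(x, y) = y. -/
def IsExt {α : Type*} (Con : Set α → Prop) (ent : Set α → α → Prop)
    (Δ : Set (Set α × α)) (x y : Set α) : Prop :=
  IsState Con ent y ∧ Phi Con ent Δ x y = y

section
variable {α ι : Type*} {Con : Set α → Prop} {ent : Set α → α → Prop}

theorem Directed.exists_subset_of_finite [Nonempty ι] {f : ι → Set α}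
    (hf : Directed (· ⊆ ·) f) {W : Set α} (hW : W.Finite) (hWf : W ⊆ ⋃ i, f i) :
    ∃ i, W ⊆ f i := by
  lift W to Finset α using hW
  exact hf.exists_mem_subset_of_finset_subset_biUnion hWf

theorem IsCons.mono {S T : Set α} (hT : IsCons Con T) (hST : S ⊆ T) : IsCons Con S :=
  fun X hX hXf => hT X (hX.trans hST) hXf

theorem isCons_iUnion_of_directed [Nonempty ι] {f : ι → Set α} (hf : Directed (· ⊆ ·) f)
    (hcons : ∀ i, IsCons Con (f i)) : IsCons Con (⋃ i, f i) := fun W hW hWf => by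
  obtain ⟨i, hi⟩ := hf.exists_subset_of_finite hWf hW
  exact hcons i W hi hWf

theorem Fop_mono {S T : Set α} (hST : S ⊆ T) : Fop Con ent S ⊆ Fop Con ent T :=
  fun _ ⟨Y, hYS, hYf, hYC, hYe⟩ => ⟨Y, hYS.trans hST, hYf, hYC, hYe⟩

theorem Fop_iUnion_subset_of_directed [Nonempty ι] {f : ι → Set α}
    (hf : Directed (· ⊆ ·) f) : Fop Con ent (⋃ i, f i) ⊆ ⋃ i, Fop Con ent (f i) := by
  rintro a ⟨Y, hY, hYf, hYC, hYe⟩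
  obtain ⟨i, hi⟩ := hf.exists_subset_of_finite hYf hY
  exact Set.mem_iUnion.2 ⟨i, Y, hi, hYf, hYC, hYe⟩

theorem IsCons.exists_maximal {S U : Set α} (hS : IsCons Con S) (hSU : S ⊆ U) :
    ∃ T, S ⊆ T ∧ Maximal (fun T => T ⊆ U ∧ IsCons Con T) T := by
  refine zorn_subset_nonempty _ (fun c hc hchain hne => ?_) S ⟨hSU, hS⟩
  have := hne.to_subtype
  refine ⟨⋃₀ c, ⟨Set.sUnion_subset fun T hT => (hc hT).1, ?_⟩,
    fun T hT => Set.subset_sUnion_of_mem hT⟩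
  rw [Set.sUnion_eq_iUnion]
  exact isCons_iUnion_of_directed hchain.directedOn.directed_val fun T => (hc T.2).2

end

-- Conditions (1)–(5) in the definition of an information system.
structure IsInfoSystem {α : Type*} (Con : Set α → Prop) (ent : Set α → α → Prop) : Prop where
  con_of_subset : ∀ X Y : Set α, X ⊆ Y → Con Y → Con X
  con_singleton : ∀ a : α, Con {a}
  con_union_singleton : ∀ (X : Set α) (a : α), ent X a → Con X → Con (X ∪ {a})
  ent_of_mem : ∀ (X : Set α) (a : α), a ∈ X → Con X → ent X a
  ent_trans : ∀ (X Y : Set α) (c : α), (∀ b ∈ Y, ent X b) → ent Y c → ent X c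

namespace IsInfoSystem
variable {α : Type*} {Con : Set α → Prop} {ent : Set α → α → Prop}

theorem subset_Fop (hI : IsInfoSystem Con ent) (S : Set α) : S ⊆ Fop Con ent S :=
  fun a ha => ⟨{a}, Set.singleton_subset_iff.2 ha, Set.finite_singleton a, hI.con_singleton a,
    hI.ent_of_mem _ a rfl (hI.con_singleton a)⟩

theorem ent_of_subset (hI : IsInfoSystem Con ent) {Y Z : Set α} {a : α} (h : ent Y a)
    (hYZ : Y ⊆ Z) (hZ : Con Z) : ent Z a :=
  hI.ent_trans Z Y a (fun b hb => hI.ent_of_mem Z b (hYZ hb) hZ) h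

theorem con_union_of_forall_ent (hI : IsInfoSystem Con ent) {Z W : Set α} (hW : W.Finite)
    (hZ : Con Z) (hent : ∀ a ∈ W, ent Z a) : Con (Z ∪ W) := by
  induction W, hW using Set.Finite.induction_on with
  | empty => simpa using hZ
  | @insert a W _ _ ih =>
    have hZW : Con (Z ∪ W) := ih fun b hb => hent b (Set.mem_insert_of_mem a hb)
    have ha : ent (Z ∪ W) a := hI.ent_of_subset (hent a (Set.mem_insert a W))
      Set.subset_union_left hZW
    refine hI.con_of_subset _ _ (fun b hb => ?_) (hI.con_union_singleton _ a ha hZW)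
    simp only [Set.mem_union, Set.mem_insert_iff, Set.mem_singleton_iff] at hb ⊢
    tauto

theorem isCons_Fop (hI : IsInfoSystem Con ent) {S : Set α} (hS : IsCons Con S) :
    IsCons Con (Fop Con ent S) := by
  intro W hW hWf
  choose! Y hYS hYf _ hYent using fun a (ha : a ∈ W) => hW ha
  have hZS : (⋃ a ∈ W, Y a) ⊆ S := Set.iUnion₂_subset hYS
  have hZ : Con (⋃ a ∈ W, Y a) := hS _ hZS (hWf.biUnion hYf)
  have hent : ∀ a ∈ W, ent (⋃ a ∈ W, Y a) a := fun a ha =>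
    hI.ent_of_subset (hYent a ha) (Set.subset_biUnion_of_mem ha) hZ
  exact hI.con_of_subset _ _ Set.subset_union_right (hI.con_union_of_forall_ent hWf hZ hent)

end IsInfoSystem

section Defaults
variable {α : Type*} {Con : Set α → Prop} {ent : Set α → α → Prop} {Δ : Set (Set α × α)}

def defaultConclusions (Δ : Set (Set α × α)) (S : Set α) : Set α :=
  {a | ∃ X, (X, a) ∈ Δ ∧ X ⊆ S}

theorem Phi_subset {x S y : Set α} (hx : x ⊆ y) (hF : Fop Con ent y ⊆ y)
    (hΔ : ∀ X a, (X, a) ∈ Δ → X ⊆ y → IsCons Con ({a} ∪ S) → a ∈ y) :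
    Phi Con ent Δ x S ⊆ y := by
  refine Set.iUnion_subset fun i => ?_
  induction i with
  | zero => exact hx
  | succ i ih =>
    rintro a (ha | ⟨X, hXΔ, hX, ha⟩)
    · exact hF (Fop_mono ih ha)
    · exact hΔ X a hXΔ (hX.trans ih) ha

theorem IsInfoSystem.monotone_phi (hI : IsInfoSystem Con ent) (x S : Set α) :
    Monotone (phi Con ent Δ x S) :=
  monotone_nat_of_le_succ fun _ => (hI.subset_Fop _).trans Set.subset_union_left

theorem IsInfoSystem.Fop_Phi_subset (hI : IsInfoSystem Con ent) (x S : Set α) :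
    Fop Con ent (Phi Con ent Δ x S) ⊆ Phi Con ent Δ x S :=
  (Fop_iUnion_subset_of_directed (hI.monotone_phi x S).directed_le).trans <|
    Set.iUnion_subset fun i =>
      Set.subset_union_left.trans (Set.subset_iUnion (phi Con ent Δ x S) (i + 1))

theorem IsInfoSystem.mem_Phi_of_mem_Delta (hI : IsInfoSystem Con ent) {x S X : Set α} {a : α}
    (hXΔ : (X, a) ∈ Δ) (hXf : X.Finite) (hX : X ⊆ Phi Con ent Δ x S)
    (ha : IsCons Con ({a} ∪ S)) : a ∈ Phi Con ent Δ x S := by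
  obtain ⟨i, hi⟩ := (hI.monotone_phi x S).directed_le.exists_subset_of_finite hXf hX
  exact Set.mem_iUnion.2 ⟨i + 1, Or.inr ⟨X, hXΔ, hi, ha⟩⟩

def IsMaximalDefaultStep (Con : Set α → Prop) (Δ : Set (Set α × α))
    (step : Set α → Set α) : Prop :=
  ∀ S, IsCons Con S → S ⊆ step S ∧
    Maximal (fun T => T ⊆ S ∪ defaultConclusions Δ S ∧ IsCons Con T) (step S)

theorem exists_isMaximalDefaultStep (Con : Set α → Prop) (Δ : Set (Set α × α)) :
    ∃ step, IsMaximalDefaultStep Con Δ step := by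
  choose! step hstep using fun S (hS : IsCons Con S) =>
    hS.exists_maximal (Set.subset_union_left (t := defaultConclusions Δ S))
  exact ⟨step, hstep⟩

theorem IsMaximalDefaultStep.mem_of_isCons_insert {step : Set α → Set α}
    (hstep : IsMaximalDefaultStep Con Δ step) {S : Set α} {a : α} (hS : IsCons Con S)
    (ha : a ∈ defaultConclusions Δ S) (hcons : IsCons Con (insert a (step S))) : a ∈ step S :=
  (hstep S hS).2.mem_of_prop_insert
    ⟨Set.insert_subset (Or.inr ha) (hstep S hS).2.1.1, hcons⟩

def extensionChain (Con : Set α → Prop) (ent : Set α → α → Prop) (step : Set α → Set α)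
    (x : Set α) : ℕ → Set α
  | 0 => x
  | n + 1 => Fop Con ent (step (extensionChain Con ent step x n))

end Defaults

namespace IsInfoSystem
variable {α : Type*} {Con : Set α → Prop} {ent : Set α → α → Prop} {Δ : Set (Set α × α)}
  {step : Set α → Set α} {x : Set α}

theorem isCons_extensionChain (hI : IsInfoSystem Con ent)
    (hstep : IsMaximalDefaultStep Con Δ step) (hx : IsCons Con x) :
    ∀ n, IsCons Con (extensionChain Con ent step x n)
  | 0 => hx
  | n + 1 => hI.isCons_Fop (hstep _ (hI.isCons_extensionChain hstep hx n)).2.1.2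

theorem step_subset_extensionChain_succ (hI : IsInfoSystem Con ent) (n : ℕ) :
    step (extensionChain Con ent step x n) ⊆ extensionChain Con ent step x (n + 1) :=
  hI.subset_Fop _

theorem monotone_extensionChain (hI : IsInfoSystem Con ent)
    (hstep : IsMaximalDefaultStep Con Δ step) (hx : IsCons Con x) :
    Monotone (extensionChain Con ent step x) :=
  monotone_nat_of_le_succ fun n =>
    (hstep _ (hI.isCons_extensionChain hstep hx n)).1.trans (hI.step_subset_extensionChain_succ n)

theorem isCons_iUnion_extensionChain (hI : IsInfoSystem Con ent)
    (hstep : IsMaximalDefaultStep Con Δ step) (hx : IsCons Con x) :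
    IsCons Con (⋃ n, extensionChain Con ent step x n) :=
  isCons_iUnion_of_directed (hI.monotone_extensionChain hstep hx).directed_le
    (hI.isCons_extensionChain hstep hx)

theorem Fop_iUnion_extensionChain (hI : IsInfoSystem Con ent)
    (hstep : IsMaximalDefaultStep Con Δ step) (hx : IsCons Con x) :
    Fop Con ent (⋃ n, extensionChain Con ent step x n) = ⋃ n, extensionChain Con ent step x n := by
  refine Set.Subset.antisymm ?_ (hI.subset_Fop _)
  refine (Fop_iUnion_subset_of_directed (hI.monotone_extensionChain hstep hx).directed_le).trans ?_
  refine Set.iUnion_subset fun n => ?_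
  have hn : Fop Con ent (extensionChain Con ent step x n) ⊆ extensionChain Con ent step x (n + 1) :=
    Fop_mono (hstep _ (hI.isCons_extensionChain hstep hx n)).1
  exact hn.trans (Set.subset_iUnion _ _)

theorem Phi_iUnion_extensionChain_subset (hI : IsInfoSystem Con ent)
    (hΔ : ∀ p ∈ Δ, p.1.Finite) (hstep : IsMaximalDefaultStep Con Δ step) (hx : IsCons Con x) :
    Phi Con ent Δ x (⋃ n, extensionChain Con ent step x n) ⊆
      ⋃ n, extensionChain Con ent step x n := by
  refine Phi_subset (Set.subset_iUnion (extensionChain Con ent step x) 0)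
    (hI.Fop_iUnion_extensionChain hstep hx).subset fun X a hXΔ hX ha => ?_
  obtain ⟨n, hn⟩ := (hI.monotone_extensionChain hstep hx).directed_le.exists_subset_of_finite
    (hΔ _ hXΔ) hX
  have hstep_sub : step (extensionChain Con ent step x n) ⊆ ⋃ n, extensionChain Con ent step x n :=
    (hI.step_subset_extensionChain_succ n).trans (Set.subset_iUnion _ _)
  refine hstep_sub (hstep.mem_of_isCons_insert (hI.isCons_extensionChain hstep hx n)
    ⟨X, hXΔ, hn⟩ (ha.mono ?_))
  exact Set.insert_subset (Or.inl rfl) (hstep_sub.trans Set.subset_union_right)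

theorem iUnion_extensionChain_subset_Phi (hI : IsInfoSystem Con ent)
    (hΔ : ∀ p ∈ Δ, p.1.Finite) (hstep : IsMaximalDefaultStep Con Δ step) (hx : IsCons Con x) :
    ⋃ n, extensionChain Con ent step x n ⊆
      Phi Con ent Δ x (⋃ n, extensionChain Con ent step x n) := by
  refine Set.iUnion_subset fun n => ?_
  induction n with
  | zero => exact Set.subset_iUnion (phi Con ent Δ x _) 0
  | succ n ih =>
    refine (Fop_mono fun b hb => ?_).trans (hI.Fop_Phi_subset _ _)
    rcases (hstep _ (hI.isCons_extensionChain hstep hx n)).2.1.1 hb with hb | ⟨X, hXΔ, hX⟩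
    · exact ih hb
    · have hby : b ∈ ⋃ n, extensionChain Con ent step x n :=
        Set.mem_iUnion.2 ⟨n + 1, hI.step_subset_extensionChain_succ n hb⟩
      exact hI.mem_Phi_of_mem_Delta hXΔ (hΔ _ hXΔ) (hX.trans ih)
        ((hI.isCons_iUnion_extensionChain hstep hx).mono
          (Set.union_subset (Set.singleton_subset_iff.2 hby) subset_rfl))

theorem isExt_iUnion_extensionChain (hI : IsInfoSystem Con ent)
    (hΔ : ∀ p ∈ Δ, p.1.Finite) (hstep : IsMaximalDefaultStep Con Δ step) (hx : IsCons Con x) :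
    IsExt Con ent Δ x (⋃ n, extensionChain Con ent step x n) :=
  ⟨⟨_, hI.isCons_iUnion_extensionChain hstep hx, (hI.Fop_iUnion_extensionChain hstep hx).symm⟩,
    (hI.Phi_iUnion_extensionChain_subset hΔ hstep hx).antisymm
      (hI.iUnion_extensionChain_subset_Phi hΔ hstep hx)⟩

end IsInfoSystem

theorem extension_exists_general {α : Type*} (Con : Set α → Prop) (ent : Set α → α → Prop)
    (Δ : Set (Set α × α))
    (hCfin : ∀ X : Set α, Con X → X.Finite)
    (hCsub : ∀ X Y : Set α, X ⊆ Y → Con Y → Con X)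
    (hCsing : ∀ a : α, Con {a})
    (hEntAdd : ∀ (X : Set α) (a : α), ent X a → Con X → Con (X ∪ {a}))
    (hRefl : ∀ (X : Set α) (a : α), a ∈ X → Con X → ent X a)
    (hTrans : ∀ (X Y : Set α) (c : α), (∀ b ∈ Y, ent X b) → ent Y c → ent X c)
    -- Δ is a set of normal default rules, each a pair (X, a) with X ∈ Con
    (hDelta : ∀ p ∈ Δ, Con p.1) :
    ∀ x : Set α, IsState Con ent x → ∃ y : Set α, IsExt Con ent Δ x y := by
  rintro x ⟨X, hX, rfl⟩
  have hI : IsInfoSystem Con ent := ⟨hCsub, hCsing, hEntAdd, hRefl, hTrans⟩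
  obtain ⟨step, hstep⟩ := exists_isMaximalDefaultStep Con Δ
  exact ⟨_, hI.isExt_iUnion_extensionChain (fun p hp => hCfin _ (hDelta p hp)) hstep
    (hI.isCons_Fop hX)⟩

/-- every information state x has at least one extension. -/
theorem extension_exists {α : Type*} (Con : Set α → Prop) (ent : Set α → α → Prop)
    (Δ : Set (Set α × α))
    (hCfin : ∀ X : Set α, Con X → X.Finite)
    (hCempty : Con ∅)
    (hEntCon : ∀ (X : Set α) (a : α), ent X a → Con X)
    (hCsub : ∀ X Y : Set α, X ⊆ Y → Con Y → Con X)
    (hCsing : ∀ a : α, Con {a})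
    (hEntAdd : ∀ (X : Set α) (a : α), ent X a → Con X → Con (X ∪ {a}))
    (hRefl : ∀ (X : Set α) (a : α), a ∈ X → Con X → ent X a)
    (hTrans : ∀ (X Y : Set α) (c : α), (∀ b ∈ Y, ent X b) → ent Y c → ent X c)
    -- Δ is a set of normal default rules, each a pair (X, a) with X ∈ Con
    (hDelta : ∀ p ∈ Δ, Con p.1) :
    ∀ x : Set α, IsState Con ent x → ∃ y : Set α, IsExt Con ent Δ x y :=
  extension_exists_general Con ent Δ hCfin hCsub hCsing hEntAdd hRefl hTrans hDelta
end

section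
/- Let (A, Con, Δ, ⊢) be a normal default structure, and x, y information states with x ε y. Then for any information state z, y ε z if and only if y = z. In other words, the only extension of an extension is itself. -/
section Aux

variable {α : Type*} (Con : Set α → Prop) (ent : Set α → α → Prop) (Δ : Set (Set α × α))

lemma phi_mono (hCsing : ∀ a : α, Con {a})
    (hRefl : ∀ (X : Set α) (a : α), a ∈ X → Con X → ent X a)
    (x S : Set α) {i j : ℕ} (h : i ≤ j) :
    phi Con ent Δ x S i ⊆ phi Con ent Δ x S j := by
  induction j with
  | zero => simp_all
  | succ j ih =>
    rcases Nat.lt_or_ge i (j + 1) with h' | h'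
    · intro a ha
      have ha' : a ∈ phi Con ent Δ x S j := ih (Nat.lt_succ_iff.1 h') ha
      exact Or.inl ⟨{a}, Set.singleton_subset_iff.2 ha', Set.finite_singleton a, hCsing a,
        hRefl {a} a rfl (hCsing a)⟩
    · have : i = j + 1 := le_antisymm h h'
      subst this; exact subset_rfl

lemma finite_subset_phi (hCsing : ∀ a : α, Con {a})
    (hRefl : ∀ (X : Set α) (a : α), a ∈ X → Con X → ent X a)
    (x S : Set α) :
    ∀ Y : Set α, Y.Finite → Y ⊆ Phi Con ent Δ x S → ∃ i, Y ⊆ phi Con ent Δ x S i := by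
  intro Y hY hsub
  have h : ∀ a ∈ Y, ∃ i, a ∈ phi Con ent Δ x S i := fun a ha =>
    Set.mem_iUnion.1 (hsub ha)
  classical
  choose f hf using h
  refine ⟨hY.toFinset.sup (fun a => if h : a ∈ Y then f a h else 0), fun a ha => ?_⟩
  have hle : (if h : a ∈ Y then f a h else 0) ≤
      hY.toFinset.sup (fun a => if h : a ∈ Y then f a h else 0) :=
    Finset.le_sup (f := fun a => if h : a ∈ Y then f a h else 0) (hY.mem_toFinset.2 ha)
  rw [dif_pos ha] at hle
  exact phi_mono Con ent Δ hCsing hRefl x S hle (hf a ha)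

/-- If Φ(x,S) = y then y is closed under entailment. -/
lemma fop_closed (hCsing : ∀ a : α, Con {a})
    (hRefl : ∀ (X : Set α) (a : α), a ∈ X → Con X → ent X a)
    {x S y : Set α} (hy : Phi Con ent Δ x S = y) :
    Fop Con ent y ⊆ y := by
  rintro a ⟨Y, hYs, hYf, hYc, hYe⟩
  obtain ⟨i, hi⟩ := finite_subset_phi Con ent Δ hCsing hRefl x S Y hYf (hy ▸ hYs)
  have : a ∈ phi Con ent Δ x S (i + 1) := Or.inl ⟨Y, hi, hYf, hYc, hYe⟩
  exact hy ▸ Set.mem_iUnion.2 ⟨i + 1, this⟩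

/-- If Φ(x,S) = y then y is closed under defaults consistent with S. -/
lemma default_closed (hCsing : ∀ a : α, Con {a})
    (hRefl : ∀ (X : Set α) (a : α), a ∈ X → Con X → ent X a)
    {x S y : Set α} (hy : Phi Con ent Δ x S = y)
    {X : Set α} {a : α} (hXa : (X, a) ∈ Δ) (hXf : X.Finite) (hXy : X ⊆ y)
    (hcons : IsCons Con ({a} ∪ S)) : a ∈ y := by
  obtain ⟨i, hi⟩ := finite_subset_phi Con ent Δ hCsing hRefl x S X hXf (hy ▸ hXy)
  have : a ∈ phi Con ent Δ x S (i + 1) := Or.inr ⟨X, hXa, hi, hcons⟩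
  exact hy ▸ Set.mem_iUnion.2 ⟨i + 1, this⟩

end Aux

/-- if x ε y then, for any information state z, y ε z iff y = z. -/
theorem extension_of_extension {α : Type*} (Con : Set α → Prop) (ent : Set α → α → Prop)
    (Δ : Set (Set α × α))
    (hCfin : ∀ X : Set α, Con X → X.Finite)
    (hCempty : Con ∅)
    (hEntCon : ∀ (X : Set α) (a : α), ent X a → Con X)
    (hCsub : ∀ X Y : Set α, X ⊆ Y → Con Y → Con X)
    (hCsing : ∀ a : α, Con {a})
    (hEntAdd : ∀ (X : Set α) (a : α), ent X a → Con X → Con (X ∪ {a}))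
    (hRefl : ∀ (X : Set α) (a : α), a ∈ X → Con X → ent X a)
    (hTrans : ∀ (X Y : Set α) (c : α), (∀ b ∈ Y, ent X b) → ent Y c → ent X c)
    -- Δ is a set of normal default rules, each a pair (X, a) with X ∈ Con
    (hDelta : ∀ p ∈ Δ, Con p.1) :
    ∀ x y : Set α, IsState Con ent x → IsState Con ent y → IsExt Con ent Δ x y →
      ∀ z : Set α, IsState Con ent z → (IsExt Con ent Δ y z ↔ y = z) := by
  intro x y _ hyState ⟨_, hy⟩ z hzState
  -- y is closed under entailment and under defaults consistent with y
  have hF : Fop Con ent y ⊆ y := fop_closed Con ent Δ hCsing hRefl hy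
  have hD : ∀ {X : Set α} {a : α}, (X, a) ∈ Δ → X ⊆ y → IsCons Con ({a} ∪ y) → a ∈ y :=
    fun hXa hXy hc =>
      default_closed Con ent Δ hCsing hRefl hy hXa (hCfin _ (hDelta _ hXa)) hXy hc
  -- key: for any S ⊇ y with defaults restricted appropriately, phi(y,S,i) ⊆ y
  have key : ∀ S : Set α, y ⊆ S → ∀ i, phi Con ent Δ y S i ⊆ y := by
    intro S hyS i
    induction i with
    | zero => exact subset_rfl
    | succ i ih =>
      rintro a (⟨Y, hYs, hYf, hYc, hYe⟩ | ⟨X, hXa, hXs, hcons⟩)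
      · exact hF ⟨Y, hYs.trans ih, hYf, hYc, hYe⟩
      · exact hD hXa (hXs.trans ih)
          (fun W hW hWf => hcons W (hW.trans (Set.union_subset_union_right _ hyS)) hWf)
  constructor
  · rintro ⟨_, hyz⟩
    apply Set.Subset.antisymm
    · intro a ha
      exact hyz ▸ Set.mem_iUnion.2 ⟨0, ha⟩
    · intro a ha
      have : a ∈ Phi Con ent Δ y z := by rw [hyz]; exact ha
      obtain ⟨i, hi⟩ := Set.mem_iUnion.1 this
      have hyz' : y ⊆ z := fun b hb => hyz ▸ Set.mem_iUnion.2 ⟨0, hb⟩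
      exact key z hyz' i hi
  · rintro rfl
    refine ⟨hyState, Set.Subset.antisymm ?_ ?_⟩
    · intro a ha
      obtain ⟨i, hi⟩ := Set.mem_iUnion.1 ha
      exact key y subset_rfl i hi
    · intro a ha
      exact Set.mem_iUnion.2 ⟨0, ha⟩
end

section
/- Let (A, Con, |~) be an abstract nonmonotonic system. For any finite consistent set X, the intersection ⋂ {Ỹ | Y ∈ Con, Y ⊆ X ⊆ Ỹ} equals X̃, where X̃ := {t ∈ A | X |~ {t}}. -/
/-- X̃ := {t ∈ A | X |~ {t}}. -/
def Tilde {α : Type*} (snake : Set α → Set α → Prop) (X : Set α) : Set α :=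
  {t | snake X {t}}

section Tilde

variable {α : Type*} {snake : Set α → Set α → Prop}

theorem subset_tilde_self {Con : Set α → Prop}
    (h4 : ∀ X Y : Set α, Y ⊆ X → Con X → snake X Y) {X : Set α} (hX : Con X) :
    X ⊆ Tilde snake X :=
  fun _ hx => h4 X _ (Set.singleton_subset_iff.2 hx) hX

theorem snake_of_subset_tilde {Y Z : Set α} (hempty : snake Y ∅)
    (hunion : ∀ Z W : Set α, snake Y Z → snake Y W → snake Y (Z ∪ W))
    (hZ : Z.Finite) (hZY : Z ⊆ Tilde snake Y) : snake Y Z := by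
  induction Z, hZ using Set.Finite.induction_on with
  | empty => exact hempty
  | @insert a s _ _ ih =>
    rw [Set.insert_eq]
    exact hunion _ _ (hZY (Set.mem_insert a s))
      (ih ((Set.subset_insert a s).trans hZY))

theorem tilde_subset_tilde_of_snake
    (h5 : ∀ X T Y : Set α, snake X T → snake (X ∪ T) Y → snake X Y)
    {X Y : Set α} (hYX : Y ⊆ X) (hsnake : snake Y X) :
    Tilde snake X ⊆ Tilde snake Y := by
  intro t ht
  refine h5 Y X {t} hsnake ?_
  rwa [Set.union_eq_self_of_subset_left hYX]

end Tilde

theorem tilde_intersection_general {α : Type*} (Con : Set α → Prop)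
    (snake : Set α → Set α → Prop)
    -- Con is a collection of finite subsets of A
    (hCfin : ∀ X : Set α, Con X → X.Finite)
    (h4 : ∀ X Y : Set α, Y ⊆ X → Con X → snake X Y)
    (h5 : ∀ X T Y : Set α, snake X T → snake (X ∪ T) Y → snake X Y)
    (h6 : ∀ X Y Z : Set α, snake X Y → snake X Z → snake X (Y ∪ Z)) :
    ∀ X : Set α, Con X →
      ⋂₀ {S : Set α | ∃ Y : Set α, Con Y ∧ Y ⊆ X ∧ X ⊆ Tilde snake Y ∧
            S = Tilde snake Y} = Tilde snake X := by
  intro X hX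
  apply Set.Subset.antisymm
  · exact Set.sInter_subset_of_mem ⟨X, hX, subset_rfl, subset_tilde_self h4 hX, rfl⟩
  · refine Set.subset_sInter ?_
    rintro _ ⟨Y, hY, hYX, hXY, rfl⟩
    have hsnake : snake Y X :=
      snake_of_subset_tilde (h4 Y ∅ (Set.empty_subset Y) hY) (h6 Y) (hCfin X hX) hXY
    exact tilde_subset_tilde_of_snake h5 hYX hsnake

/-- for any finite consistent set X,
⋂ {Ỹ | Y ∈ Con, Y ⊆ X ⊆ Ỹ} = X̃. -/
theorem tilde_intersection {α : Type*} (Con : Set α → Prop)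
    (snake : Set α → Set α → Prop)
    -- Con is a collection of finite subsets of A
    (hCfin : ∀ X : Set α, Con X → X.Finite)
    -- |~ is a relation between members of Con
    (hSnakeCon : ∀ X Y : Set α, snake X Y → Con X ∧ Con Y)
    (h1 : ∀ X Y : Set α, X ⊆ Y → Con Y → Con X)
    (h2 : ∀ a : α, Con {a})
    (h3 : ∀ X T : Set α, snake X T → Con (X ∪ T))
    (h4 : ∀ X Y : Set α, Y ⊆ X → Con X → snake X Y)
    (h5 : ∀ X T Y : Set α, snake X T → snake (X ∪ T) Y → snake X Y)
    (h6 : ∀ X Y Z : Set α, snake X Y → snake X Z → snake X (Y ∪ Z)) :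
    ∀ X : Set α, Con X →
      ⋂₀ {S : Set α | ∃ Y : Set α, Con Y ∧ Y ⊆ X ∧ X ⊆ Tilde snake Y ∧
            S = Tilde snake Y} = Tilde snake X :=
  tilde_intersection_general Con snake hCfin h4 h5 h6
end

section
/- Let (A, Con, |~) be a cumulative nonmonotonic system. For finite consistent sets P, Q ∈ Con, if Q ⊆ P ⊆ Q̃, then P̃ = Q̃, where X̃ := {t ∈ A | X |~ {t}}. -/
/-!
Since `P` is finite and every element of `P` is a consequence of `Q`, the "and" rule gives
`Q |~ P`. Cautious cut then shows that `Q ∪ P = P` has no consequences beyond those of `Q`,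
and cautious monotony, applied to the elements of `P` one at a time, that it loses none.
-/

section
variable {α : Type*} {snake : Set α → Set α → Prop}

theorem snake_of_subset_tilde_s18
    (h6 : ∀ X Y Z : Set α, snake X Y → snake X Z → snake X (Y ∪ Z))
    {X S : Set α} (hS : S.Finite) (h0 : snake X ∅) (hSX : S ⊆ Tilde snake X) :
    snake X S := by
  induction S, hS using Set.Finite.induction_on with
  | empty => exact h0
  | @insert a S _ _ ih =>
    rw [Set.insert_eq]
    exact h6 X {a} S (hSX (Set.mem_insert a S))
      (ih ((Set.subset_insert a S).trans hSX))

theorem tilde_union_subset_tilde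
    (h5 : ∀ X T Y : Set α, snake X T → snake (X ∪ T) Y → snake X Y)
    {X T : Set α} (hXT : snake X T) : Tilde snake (X ∪ T) ⊆ Tilde snake X :=
  fun t ht => h5 X T {t} hXT ht

theorem tilde_subset_tilde_union
    (hcm : ∀ (X : Set α) (a b : α), snake X {a} → snake X {b} → snake (X ∪ {a}) {b})
    {X S : Set α} (hS : S.Finite) (hSX : S ⊆ Tilde snake X) :
    Tilde snake X ⊆ Tilde snake (X ∪ S) := by
  induction S, hS using Set.Finite.induction_on with
  | empty => rw [Set.union_empty]
  | @insert a S _ _ ih =>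
    have hXS := ih ((Set.subset_insert a S).trans hSX)
    have ha : a ∈ Tilde snake (X ∪ S) := hXS (hSX (Set.mem_insert a S))
    intro t ht
    have hcm' := hcm (X ∪ S) a t ha (hXS ht)
    rwa [Set.union_assoc, Set.union_comm S, ← Set.insert_eq] at hcm'
end

theorem tilde_stable_general {α : Type*} (Con : Set α → Prop)
    (snake : Set α → Set α → Prop)
    -- Con is a collection of finite subsets of A
    (hCfin : ∀ X : Set α, Con X → X.Finite)
    (h4 : ∀ X Y : Set α, Y ⊆ X → Con X → snake X Y)
    (h5 : ∀ X T Y : Set α, snake X T → snake (X ∪ T) Y → snake X Y)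
    (h6 : ∀ X Y Z : Set α, snake X Y → snake X Z → snake X (Y ∪ Z))
    -- cautious monotony
    (hcm : ∀ (X : Set α) (a b : α), snake X {a} → snake X {b} → snake (X ∪ {a}) {b}) :
    ∀ P Q : Set α, Con P → Con Q → Q ⊆ P → P ⊆ Tilde snake Q →
      Tilde snake P = Tilde snake Q := by
  intro P Q hP hQ hQP hPQ
  have hPfin : P.Finite := hCfin P hP
  have hQP' : snake Q P :=
    snake_of_subset_tilde_s18 h6 hPfin (h4 Q ∅ (Set.empty_subset Q) hQ) hPQ
  rw [← Set.union_eq_right.mpr hQP]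
  exact (tilde_union_subset_tilde h5 hQP').antisymm (tilde_subset_tilde_union hcm hPfin hPQ)

/-- in a cumulative nonmonotonic system, if Q ⊆ P ⊆ Q̃ for finite
consistent sets P, Q, then P̃ = Q̃. -/
theorem tilde_stable {α : Type*} (Con : Set α → Prop)
    (snake : Set α → Set α → Prop)
    -- Con is a collection of finite subsets of A
    (hCfin : ∀ X : Set α, Con X → X.Finite)
    -- |~ is a relation between members of Con
    (hSnakeCon : ∀ X Y : Set α, snake X Y → Con X ∧ Con Y)
    (h1 : ∀ X Y : Set α, X ⊆ Y → Con Y → Con X)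
    (h2 : ∀ a : α, Con {a})
    (h3 : ∀ X T : Set α, snake X T → Con (X ∪ T))
    (h4 : ∀ X Y : Set α, Y ⊆ X → Con X → snake X Y)
    (h5 : ∀ X T Y : Set α, snake X T → snake (X ∪ T) Y → snake X Y)
    (h6 : ∀ X Y Z : Set α, snake X Y → snake X Z → snake X (Y ∪ Z))
    -- cautious monotony
    (hcm : ∀ (X : Set α) (a b : α), snake X {a} → snake X {b} → snake (X ∪ {a}) {b}) :
    ∀ P Q : Set α, Con P → Con Q → Q ⊆ P → P ⊆ Tilde snake Q →
      Tilde snake P = Tilde snake Q :=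
  tilde_stable_general Con snake hCfin h4 h5 h6 hcm
end
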